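/- Let Σ be a finite nonempty alphabet, let L ∈ LMO(Σ), and let χ_L : Σ* → {0,1} be the characteristic function of L. Then for every ε > 0 there exists φ ∈ PMO(Σ) such that |φ(w) − χ_L(w)| < ε for all w ∈ Σ*. -/

import Mathlib

open Matrix

/-- A Measure-Only one-way quantum finite automaton (MOn-1qfa) over the alphabet `σ`
(the letter `none` plays the role of the end-marker `#`).  The data consists of:
the number of states `m`, for each letter `c` (and the end-marker) the number `k c`
of distinct eigenvalues of the observable `O_c`, the eigenvalues `eig c` themselves,
the corresponding orthogonal projectors `P c`, the initial (row) vector `init`,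
and the set `F` of (indices of) accepting eigenvalues of the end-marker observable. -/
structure MOnQFA (σ : Type) where
  m : ℕ
  k : Option σ → ℕ
  eig : (c : Option σ) → Fin (k c) → ℝ
  P : (c : Option σ) → Fin (k c) → Matrix (Fin m) (Fin m) ℂ
  init : Matrix (Fin 1) (Fin m) ℂ
  F : Finset (Fin (k none))

namespace MOnQFA

variable {σ : Type}

/-- Well-formedness of a MOn-1qfa: the eigenvalues of each observable are distinct,
the `P c j` are pairwise orthogonal Hermitian idempotents (orthogonal projectors)
summing to the identity (so that `O_c = ∑ j, eig c j • P c j` is a Hermitian matrix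
with spectral decomposition given by the data), and the initial vector has norm 1. -/
def Valid (A : MOnQFA σ) : Prop :=
  (∀ c, Function.Injective (A.eig c)) ∧
  (∀ c j, (A.P c j)ᴴ = A.P c j) ∧
  (∀ c j, A.P c j * A.P c j = A.P c j) ∧
  (∀ c j j', j ≠ j' → A.P c j * A.P c j' = 0) ∧
  (∀ c, ∑ j, A.P c j = 1) ∧
  (∑ i, Complex.normSq (A.init 0 i) = 1)

/-- The density matrix `σ(w)` reached after reading the word `w`:
`σ(ε) = π₀† π₀` and `σ(yc) = ∑ j, P_j(c) σ(y) P_j(c)`. -/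
noncomputable def dens (A : MOnQFA σ) (w : List σ) : Matrix (Fin A.m) (Fin A.m) ℂ :=
  w.foldl (fun ρ c => ∑ j, A.P (some c) j * ρ * A.P (some c) j) (A.initᴴ * A.init)

/-- The acceptance probability `p_A(w) = Tr (∑_{j ∈ F} P_j(#) σ(w) P_j(#))`. -/
noncomputable def prob (A : MOnQFA σ) (w : List σ) : ℝ :=
  (Matrix.trace (∑ j ∈ A.F, A.P none j * A.dens w * A.P none j)).re

end MOnQFA

/-- `LMO σ` : the class of languages recognized by some MOn-1qfa over `σ`
with an isolated cut-point. -/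
def LMO (σ : Type) : Set (Set (List σ)) :=
  {L | ∃ A : MOnQFA σ, A.Valid ∧ ∃ lam δ : ℝ, 0 < lam ∧ 0 < δ ∧
        (∀ w, |A.prob w - lam| ≥ δ) ∧ L = {w | A.prob w > lam}}

/-- `PMO σ` : the class of probabilistic events induced by MOn-1qfas over `σ`. -/
def PMO (σ : Type) : Set (List σ → ℝ) :=
  {φ | ∃ A : MOnQFA σ, A.Valid ∧ φ = A.prob}

/-!
Run `n` copies of `A` in parallel on the tensor product of their state spaces. The end-marker
outcomes of the copies are then independent, each accepting with probability `p = p_A(w)`, so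
the number of accepting copies has mean `n p` and variance `n p (1 - p) ≤ n / 4`. Accept when
more than `λ n` copies accept: since `|p - λ| ≥ δ`, Chebyshev's inequality bounds the error
by `1 / (4 n δ²)`, which is below `ε` for large `n`.
-/

open ComplexOrder Kronecker

namespace Matrix

section

variable {n ι R : Type*} [Fintype n] [Fintype ι]

lemma PosSemidef.sum_mul_mul_self {P : ι → Matrix n n ℂ} (hP : ∀ j, (P j)ᴴ = P j)
    {ρ : Matrix n n ℂ} (hρ : ρ.PosSemidef) : (∑ j, P j * ρ * P j).PosSemidef :=
  posSemidef_sum _ fun j _ => by simpa only [hP] using hρ.mul_mul_conjTranspose_same (P j)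

lemma trace_sum_mul_mul_self [DecidableEq n] [CommSemiring R] {P : ι → Matrix n n R}
    (hP : ∀ j, P j * P j = P j) (hsum : ∑ j, P j = 1) (ρ : Matrix n n R) :
    ∑ j, (P j * ρ * P j).trace = ρ.trace := by
  simp_rw [trace_mul_cycle _ ρ, hP, ← trace_sum, ← Finset.sum_mul, hsum, one_mul]

lemma PosSemidef.ofReal_re_trace {M : Matrix n n ℂ} (hM : M.PosSemidef) :
    (M.trace.re : ℂ) = M.trace :=
  (Complex.eq_re_of_ofReal_le (r := 0) (by simpa using hM.trace_nonneg)).symm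

lemma trace_reindex {m : Type*} [Fintype m] [AddCommMonoid R] (e : m ≃ n) (M : Matrix m m R) :
    (reindex e e M).trace = M.trace := by
  simp only [trace, diag, reindex_apply, submatrix_apply]
  exact e.symm.sum_comp fun i => M i i

end

lemma sum_kronecker_sum {ι ι' l m l' m' R : Type*} [Fintype ι] [Fintype ι'] [Semiring R]
    (f : ι → Matrix l m R) (g : ι' → Matrix l' m' R) :
    (∑ i, f i) ⊗ₖ (∑ j, g j) = ∑ p : ι × ι', f p.1 ⊗ₖ g p.2 := by
  ext a b
  simp [kroneckerMap_apply, sum_apply, Finset.sum_mul_sum, Fintype.sum_prod_type]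

end Matrix

lemma Finset.sum_le_sum_mul_sq_div_sq {ι : Type*} [Fintype ι] {q : ι → ℝ}
    (hq : ∀ i, 0 ≤ q i) (X : ι → ℝ) {c : ℝ} (hc : 0 < c) {s : Finset ι}
    (hs : ∀ i ∈ s, c ≤ |X i|) :
    ∑ i ∈ s, q i ≤ (∑ i, q i * X i ^ 2) / c ^ 2 := by
  rw [le_div_iff₀ (pow_pos hc 2), Finset.sum_mul]
  calc ∑ i ∈ s, q i * c ^ 2 ≤ ∑ i ∈ s, q i * X i ^ 2 := by
        refine Finset.sum_le_sum fun i hi => mul_le_mul_of_nonneg_left ?_ (hq i)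
        simpa only [sq_abs] using pow_le_pow_left₀ hc.le (hs i hi) 2
    _ ≤ ∑ i, q i * X i ^ 2 :=
        Finset.sum_le_sum_of_subset_of_nonneg (Finset.subset_univ s)
          fun i _ _ => mul_nonneg (hq i) (sq_nonneg _)

namespace MOnQFA

variable {σ : Type} {A B : MOnQFA σ}

namespace Valid

lemma conjTranspose_P (hA : A.Valid) (c : Option σ) (j : Fin (A.k c)) : (A.P c j)ᴴ = A.P c j :=
  hA.2.1 c j

lemma P_mul_self (hA : A.Valid) (c : Option σ) (j : Fin (A.k c)) : A.P c j * A.P c j = A.P c j :=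
  hA.2.2.1 c j

lemma P_mul_P_of_ne (hA : A.Valid) (c : Option σ) {j j' : Fin (A.k c)} (h : j ≠ j') :
    A.P c j * A.P c j' = 0 :=
  hA.2.2.2.1 c j j' h

lemma sum_P (hA : A.Valid) (c : Option σ) : ∑ j, A.P c j = 1 :=
  hA.2.2.2.2.1 c

lemma sum_normSq_init (hA : A.Valid) : ∑ i, Complex.normSq (A.init 0 i) = 1 :=
  hA.2.2.2.2.2

end Valid

lemma dens_nil (A : MOnQFA σ) : A.dens [] = A.initᴴ * A.init := rfl

lemma dens_append_singleton (A : MOnQFA σ) (w : List σ) (c : σ) :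
    A.dens (w ++ [c]) = ∑ j, A.P (some c) j * A.dens w * A.P (some c) j := by
  simp only [dens, List.foldl_append, List.foldl_cons, List.foldl_nil]

lemma trace_dens_nil (A : MOnQFA σ) :
    (A.dens []).trace = ∑ i, (Complex.normSq (A.init 0 i) : ℂ) := by
  simp only [dens_nil, trace, diag, mul_apply, conjTranspose_apply, Fin.sum_univ_one,
    Complex.normSq_eq_conj_mul_self, Complex.star_def]

lemma Valid.dens_posSemidef (hA : A.Valid) (w : List σ) : (A.dens w).PosSemidef := by
  induction w using List.reverseRecOn with
  | nil => exact posSemidef_conjTranspose_mul_self A.init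
  | append_singleton w c ih =>
    rw [dens_append_singleton]
    exact ih.sum_mul_mul_self (hA.conjTranspose_P _)

lemma Valid.trace_dens (hA : A.Valid) (w : List σ) : (A.dens w).trace = 1 := by
  induction w using List.reverseRecOn with
  | nil => exact_mod_cast A.trace_dens_nil.trans (by exact_mod_cast hA.sum_normSq_init)
  | append_singleton w c ih =>
    rw [dens_append_singleton, trace_sum, trace_sum_mul_mul_self (hA.P_mul_self _) (hA.sum_P _),
      ih]

noncomputable def outcomeProb (A : MOnQFA σ) (w : List σ) (j : Fin (A.k none)) : ℝ :=
  (A.P none j * A.dens w * A.P none j).trace.re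

lemma Valid.posSemidef_outcome (hA : A.Valid) (w : List σ) (j : Fin (A.k none)) :
    (A.P none j * A.dens w * A.P none j).PosSemidef := by
  simpa only [hA.conjTranspose_P] using
    (hA.dens_posSemidef w).mul_mul_conjTranspose_same (A.P none j)

lemma Valid.ofReal_outcomeProb (hA : A.Valid) (w : List σ) (j : Fin (A.k none)) :
    (A.outcomeProb w j : ℂ) = (A.P none j * A.dens w * A.P none j).trace :=
  (hA.posSemidef_outcome w j).ofReal_re_trace

lemma Valid.outcomeProb_nonneg (hA : A.Valid) (w : List σ) (j : Fin (A.k none)) :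
    0 ≤ A.outcomeProb w j :=
  (Complex.nonneg_iff.mp (hA.posSemidef_outcome w j).trace_nonneg).1

lemma Valid.sum_outcomeProb (hA : A.Valid) (w : List σ) : ∑ j, A.outcomeProb w j = 1 := by
  have h : ∑ j, (A.outcomeProb w j : ℂ) = 1 := by
    simp_rw [hA.ofReal_outcomeProb]
    rw [trace_sum_mul_mul_self (hA.P_mul_self _) (hA.sum_P _), hA.trace_dens]
  exact_mod_cast h

lemma prob_eq_sum_outcomeProb (A : MOnQFA σ) (w : List σ) :
    A.prob w = ∑ j ∈ A.F, A.outcomeProb w j := by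
  rw [prob, trace_sum, Complex.re_sum]
  rfl

lemma Valid.one_sub_prob (hA : A.Valid) (w : List σ) :
    1 - A.prob w = ∑ j ∈ A.Fᶜ, A.outcomeProb w j := by
  rw [← hA.sum_outcomeProb w, prob_eq_sum_outcomeProb, ← Finset.sum_compl_add_sum A.F]
  ring

lemma Valid.prob_nonneg (hA : A.Valid) (w : List σ) : 0 ≤ A.prob w := by
  rw [prob_eq_sum_outcomeProb]
  exact Finset.sum_nonneg fun j _ => hA.outcomeProb_nonneg w j

lemma Valid.prob_le_one (hA : A.Valid) (w : List σ) : A.prob w ≤ 1 := by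
  have h : 0 ≤ 1 - A.prob w := by
    rw [hA.one_sub_prob]
    exact Finset.sum_nonneg fun j _ => hA.outcomeProb_nonneg w j
  linarith

noncomputable abbrev flatten {a b : ℕ} :
    Matrix (Fin a × Fin b) (Fin a × Fin b) ℂ ≃ₐ[ℂ]
      Matrix (Fin (a * b)) (Fin (a * b)) ℂ :=
  reindexAlgEquiv ℂ ℂ finProdFinEquiv

/-- The accepting set is irrelevant: only the outcome probabilities of `tensor` are used. -/
@[reducible] noncomputable def tensor (A B : MOnQFA σ) : MOnQFA σ where
  m := A.m * B.m
  k c := A.k c * B.k c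
  eig _ j := j
  P c j := flatten (A.P c (finProdFinEquiv.symm j).1 ⊗ₖ B.P c (finProdFinEquiv.symm j).2)
  init := reindex (Equiv.prodUnique (Fin 1) (Fin 1)) finProdFinEquiv (A.init ⊗ₖ B.init)
  F := ∅

lemma tensor_dens_nil : (A.tensor B).dens [] = flatten (A.dens [] ⊗ₖ B.dens []) := by
  simp only [dens_nil, conjTranspose_reindex, conjTranspose_kronecker, flatten,
    coe_reindexAlgEquiv, mul_kronecker_mul]
  simp only [reindex_apply]
  exact submatrix_mul_equiv _ _ _ _ _

lemma Valid.tensor (hA : A.Valid) (hB : B.Valid) : (A.tensor B).Valid := by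
  refine ⟨fun c j j' h => Fin.val_injective (Nat.cast_injective h), fun c j => ?_, fun c j => ?_,
    fun c j j' h => ?_, fun c => ?_, ?_⟩
  · simp only [flatten, coe_reindexAlgEquiv, conjTranspose_reindex,
      conjTranspose_kronecker, hA.conjTranspose_P, hB.conjTranspose_P]
  · simp only [← map_mul, ← mul_kronecker_mul, hA.P_mul_self, hB.P_mul_self]
  · have hne : finProdFinEquiv.symm j ≠ finProdFinEquiv.symm j' :=
      finProdFinEquiv.symm.injective.ne h
    simp only [← map_mul, ← mul_kronecker_mul]
    rcases not_and_or.mp (mt Prod.ext_iff.mpr hne) with h1 | h2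
    · rw [hA.P_mul_P_of_ne c h1, zero_kronecker, map_zero]
    · rw [hB.P_mul_P_of_ne c h2, kronecker_zero, map_zero]
  · rw [← finProdFinEquiv.sum_comp]
    simp only [Equiv.symm_apply_apply, ← map_sum, ← sum_kronecker_sum, hA.sum_P, hB.sum_P,
      one_kronecker_one, map_one]
  · have h := (A.tensor B).trace_dens_nil
    rw [tensor_dens_nil, coe_reindexAlgEquiv, trace_reindex, trace_kronecker, hA.trace_dens,
      hB.trace_dens, one_mul] at h
    exact_mod_cast h.symm

lemma tensor_dens (w : List σ) : (A.tensor B).dens w = flatten (A.dens w ⊗ₖ B.dens w) := by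
  induction w using List.reverseRecOn with
  | nil => exact tensor_dens_nil
  | append_singleton w c ih =>
    rw [dens_append_singleton, dens_append_singleton, dens_append_singleton, ih,
      ← finProdFinEquiv.sum_comp]
    simp only [Equiv.symm_apply_apply, ← map_mul, ← mul_kronecker_mul, ← map_sum,
      sum_kronecker_sum]

lemma Valid.tensor_outcomeProb (hA : A.Valid) (hB : B.Valid) (w : List σ)
    (p : Fin (A.k none) × Fin (B.k none)) :
    (A.tensor B).outcomeProb w (finProdFinEquiv p) = A.outcomeProb w p.1 * B.outcomeProb w p.2 := by
  have h : ((A.tensor B).outcomeProb w (finProdFinEquiv p) : ℂ) =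
      (A.outcomeProb w p.1 : ℂ) * B.outcomeProb w p.2 := by
    rw [(hA.tensor hB).ofReal_outcomeProb, hA.ofReal_outcomeProb, hB.ofReal_outcomeProb,
      tensor_dens]
    simp only [Equiv.symm_apply_apply, ← map_mul, ← mul_kronecker_mul]
    rw [coe_reindexAlgEquiv, trace_reindex, trace_kronecker]
  exact_mod_cast h

@[reducible] noncomputable def unit (σ : Type) : MOnQFA σ where
  m := 1
  k _ := 1
  eig _ _ := 0
  P _ _ := 1
  init := 1
  F := ∅

lemma valid_unit : (unit σ).Valid :=
  ⟨fun _ => Function.injective_of_subsingleton _, fun _ _ => conjTranspose_one,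
    fun _ _ => mul_one 1, fun _ j j' h => absurd (Subsingleton.elim j j') h,
    fun _ => Fin.sum_univ_one _, by simp⟩

noncomputable def tensorPow (A : MOnQFA σ) : ℕ → MOnQFA σ
  | 0 => unit σ
  | n + 1 => A.tensor (A.tensorPow n)

lemma Valid.tensorPow (hA : A.Valid) : ∀ n, (A.tensorPow n).Valid
  | 0 => valid_unit
  | n + 1 => hA.tensor (hA.tensorPow n)

/-- The number of the `n` copies of `A` whose end-marker outcome is accepting. -/
noncomputable def acceptCount (A : MOnQFA σ) : (n : ℕ) → Fin ((A.tensorPow n).k none) → ℕ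
  | 0, _ => 0
  | n + 1, j => (if (finProdFinEquiv.symm j).1 ∈ A.F then 1 else 0)
      + A.acceptCount n (finProdFinEquiv.symm j).2

noncomputable def tensorPowSuccEquiv (A : MOnQFA σ) (n : ℕ) :
    Fin (A.k none) × Fin ((A.tensorPow n).k none) ≃ Fin ((A.tensorPow (n + 1)).k none) :=
  finProdFinEquiv

lemma acceptCount_succ (n : ℕ) (p : Fin (A.k none) × Fin ((A.tensorPow n).k none)) :
    A.acceptCount (n + 1) (A.tensorPowSuccEquiv n p) =
      (if p.1 ∈ A.F then 1 else 0) + A.acceptCount n p.2 := by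
  change A.acceptCount (n + 1) (finProdFinEquiv p) = _
  simp only [acceptCount, Equiv.symm_apply_apply]

lemma Valid.outcomeProb_tensorPow_succ (hA : A.Valid) (n : ℕ) (w : List σ)
    (p : Fin (A.k none) × Fin ((A.tensorPow n).k none)) :
    (A.tensorPow (n + 1)).outcomeProb w (A.tensorPowSuccEquiv n p) =
      A.outcomeProb w p.1 * (A.tensorPow n).outcomeProb w p.2 :=
  hA.tensor_outcomeProb (hA.tensorPow n) w p

lemma Valid.sum_outcomeProb_mul_ite (hA : A.Valid) (w : List σ) (x y : ℝ) :
    ∑ i, A.outcomeProb w i * (if i ∈ A.F then x else y) =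
      A.prob w * x + (1 - A.prob w) * y := by
  rw [hA.one_sub_prob, prob_eq_sum_outcomeProb, Finset.sum_mul, Finset.sum_mul,
    ← Finset.sum_add_sum_compl A.F]
  congr 1 <;> refine Finset.sum_congr rfl fun i hi => ?_
  · rw [if_pos hi]
  · rw [if_neg (Finset.mem_compl.mp hi)]

/-- One more copy adds an accepting count with probability `A.prob w`. -/
lemma Valid.sum_outcomeProb_tensorPow_succ (hA : A.Valid) (n : ℕ) (w : List σ)
    (f : ℕ → ℝ) :
    ∑ j, (A.tensorPow (n + 1)).outcomeProb w j * f (A.acceptCount (n + 1) j) =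
      ∑ j, (A.tensorPow n).outcomeProb w j *
        (A.prob w * f (A.acceptCount n j + 1) + (1 - A.prob w) * f (A.acceptCount n j)) := by
  rw [← (A.tensorPowSuccEquiv n).sum_comp, Fintype.sum_prod_type, Finset.sum_comm]
  refine Finset.sum_congr rfl fun j _ => ?_
  rw [← hA.sum_outcomeProb_mul_ite, Finset.mul_sum]
  refine Finset.sum_congr rfl fun i _ => ?_
  rw [hA.outcomeProb_tensorPow_succ, acceptCount_succ]
  split_ifs <;> ring_nf

lemma Valid.sum_outcomeProb_mul_sq_acceptCount_sub (hA : A.Valid) (n : ℕ) (w : List σ) :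
    ∑ j, (A.tensorPow n).outcomeProb w j * ((A.acceptCount n j : ℝ) - n * A.prob w) ^ 2 =
      n * (A.prob w * (1 - A.prob w)) := by
  induction n with
  | zero => simp [acceptCount]
  | succ n ih =>
    have h : ∀ c : ℕ, A.prob w * (((c + 1 : ℕ) : ℝ) - (n + 1 : ℕ) * A.prob w) ^ 2 +
        (1 - A.prob w) * ((c : ℝ) - (n + 1 : ℕ) * A.prob w) ^ 2 =
          ((c : ℝ) - n * A.prob w) ^ 2 + A.prob w * (1 - A.prob w) := by
      intro c
      push_cast
      ring
    rw [hA.sum_outcomeProb_tensorPow_succ n w fun c => ((c : ℝ) - (n + 1 : ℕ) * A.prob w) ^ 2]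
    simp_rw [h, mul_add, Finset.sum_add_distrib, ih, ← Finset.sum_mul,
      (hA.tensorPow n).sum_outcomeProb]
    push_cast
    ring

lemma Valid.sum_outcomeProb_le_of_le_abs (hA : A.Valid) {n : ℕ} (hn : 0 < n) (w : List σ)
    {δ : ℝ} (hδ : 0 < δ) {s : Finset (Fin ((A.tensorPow n).k none))}
    (hs : ∀ j ∈ s, δ * n ≤ |(A.acceptCount n j : ℝ) - n * A.prob w|) :
    ∑ j ∈ s, (A.tensorPow n).outcomeProb w j ≤ 1 / (4 * n * δ ^ 2) := by
  have hn' : (0 : ℝ) < n := Nat.cast_pos.mpr hn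
  refine ((Finset.sum_le_sum_mul_sq_div_sq ((hA.tensorPow n).outcomeProb_nonneg w) _
    (mul_pos hδ hn') hs).trans ?_)
  rw [hA.sum_outcomeProb_mul_sq_acceptCount_sub, div_le_div_iff₀ (by positivity) (by positivity)]
  nlinarith [sq_nonneg (2 * A.prob w - 1), sq_nonneg δ]

noncomputable def majority (A : MOnQFA σ) (n : ℕ) (t : ℝ) : MOnQFA σ :=
  { A.tensorPow n with F := {j | t < A.acceptCount n j} }

lemma mem_majority_F {n : ℕ} {t : ℝ} {j : Fin ((A.tensorPow n).k none)} :
    j ∈ (A.majority n t).F ↔ t < A.acceptCount n j :=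
  Finset.mem_filter.trans (and_iff_right (Finset.mem_univ j))

lemma Valid.majority (hA : A.Valid) (n : ℕ) (t : ℝ) : (A.majority n t).Valid :=
  hA.tensorPow n

lemma Valid.prob_majority_le (hA : A.Valid) {n : ℕ} (hn : 0 < n) (w : List σ)
    {t δ : ℝ} (hδ : 0 < δ) (hp : A.prob w + δ ≤ t) :
    (A.majority n (t * n)).prob w ≤ 1 / (4 * n * δ ^ 2) := by
  rw [prob_eq_sum_outcomeProb]
  refine hA.sum_outcomeProb_le_of_le_abs hn w hδ fun j hj => ?_
  replace hj : t * n < A.acceptCount n j := mem_majority_F.mp hj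
  rw [abs_of_nonneg (by nlinarith)]
  nlinarith

lemma Valid.one_sub_prob_majority_le (hA : A.Valid) {n : ℕ} (hn : 0 < n) (w : List σ)
    {t δ : ℝ} (hδ : 0 < δ) (hp : t + δ ≤ A.prob w) :
    1 - (A.majority n (t * n)).prob w ≤ 1 / (4 * n * δ ^ 2) := by
  rw [(hA.majority n _).one_sub_prob]
  refine hA.sum_outcomeProb_le_of_le_abs hn w hδ fun j hj => ?_
  replace hj : (A.acceptCount n j : ℝ) ≤ t * n :=
    not_lt.mp (mem_majority_F.not.mp (Finset.mem_compl.mp hj))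
  rw [abs_of_nonpos (by nlinarith)]
  nlinarith

end MOnQFA

open MOnQFA in
theorem pmo_approximates_characteristic_function
    (σ : Type) (L : Set (List σ)) (hL : L ∈ LMO σ)
    (ε : ℝ) (hε : 0 < ε) :
    ∃ φ ∈ PMO σ, ∀ w : List σ,
      |φ w - L.indicator (fun _ => (1 : ℝ)) w| < ε := by
  obtain ⟨A, hA, lam, δ, -, hδ, hiso, rfl⟩ := hL
  obtain ⟨n, hn⟩ := exists_nat_gt (1 / (4 * δ ^ 2 * ε))
  have hn0 : 0 < n := by exact_mod_cast (by positivity : 0 < 1 / (4 * δ ^ 2 * ε)).trans hn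
  have hbound : 1 / (4 * n * δ ^ 2) < ε := by
    rw [div_lt_iff₀ (by positivity)] at hn ⊢
    linarith
  refine ⟨_, ⟨A.majority n (lam * n), hA.majority n _, rfl⟩, fun w => ?_⟩
  have hC := hA.majority n (lam * n)
  rcases le_abs'.mp (hiso w) with hp | hp
  · have hw : w ∉ {w | A.prob w > lam} := show ¬lam < A.prob w from not_lt.mpr (by linarith)
    rw [Set.indicator_of_notMem hw, sub_zero, abs_of_nonneg (hC.prob_nonneg w)]
    exact (hA.prob_majority_le hn0 w hδ (by linarith)).trans_lt hbound
  · have hw : w ∈ {w | A.prob w > lam} := show lam < A.prob w by linarith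
    rw [Set.indicator_of_mem hw, abs_sub_comm, abs_of_nonneg (sub_nonneg.mpr (hC.prob_le_one w))]
    exact (hA.one_sub_prob_majority_le hn0 w hδ (by linarith)).trans_lt hbound
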